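/- arXiv:1907.08607 — 6 statements merged into one kernel-verified Lean document; each statement's English description precedes it below -/
import Mathlib

section
/- Let G = (X, E) be a finite simple undirected graph and let π be a ranking of G such that π(x) < π(y) implies deg(y) ≤ deg(x) (vertices are ranked in decreasing order of degree). Then the number of wedges processed under π satisfies W(π) ≤ Σ_{{x,y} ∈ E} min(deg(x), deg(y)). -/
open Finset

/-- `deg_x(y)`: the number of neighbors `z` of `y` with rank strictly greater than the
rank of `x`. -/
def rankedDeg {X L : Type*} [Fintype X] [LinearOrder L] (G : SimpleGraph X)
    [DecidableRel G.Adj] (π : X → L) (x y : X) : ℕ :=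
  ((G.neighborFinset y).filter (fun z => π x < π z)).card

/-- `W(π)`: the number of wedges processed under the ranking `π`, namely
`Σ_{x ∈ X} Σ_{y ∈ N(x), π(y) > π(x)} deg_x(y)`. -/
def wedgesProcessed {X L : Type*} [Fintype X] [LinearOrder L] (G : SimpleGraph X)
    [DecidableRel G.Adj] (π : X → L) : ℕ :=
  ∑ x : X, ∑ y ∈ (G.neighborFinset x).filter (fun y => π x < π y), rankedDeg G π x y

/-- `Σ_{{x,y} ∈ E} min(deg(x), deg(y))`: the sum over the (undirected) edges of `G` of
the minimum degree of the two endpoints. -/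
def edgeMinDegSum {X : Type*} [Fintype X] [DecidableEq X] (G : SimpleGraph X)
    [DecidableRel G.Adj] : ℕ :=
  ∑ e ∈ G.edgeFinset,
    Sym2.lift ⟨fun x y => min (G.degree x) (G.degree y),
      fun x y => by simp [min_comm]⟩ e

/-- If `π` ranks vertices in decreasing order of degree, then the number of wedges
processed under `π` is at most `Σ_{{x,y} ∈ E} min(deg(x), deg(y))`. -/
theorem wedgesProcessed_le_of_degree_order {X L : Type*} [Fintype X] [DecidableEq X]
    [LinearOrder L] (G : SimpleGraph X) [DecidableRel G.Adj] (π : X → L)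
    (hπ : Function.Injective π)
    (hdeg : ∀ x y : X, π x < π y → G.degree y ≤ G.degree x) :
    wedgesProcessed G π ≤ edgeMinDegSum G := by
  classical
  set D : Finset (X × X) :=
    Finset.univ.filter (fun p => G.Adj p.1 p.2 ∧ π p.1 < π p.2) with hD
  have h1 : wedgesProcessed G π = ∑ p ∈ D, rankedDeg G π p.1 p.2 := by
    unfold wedgesProcessed
    rw [hD, Finset.sum_filter, ← Finset.univ_product_univ, Finset.sum_product]
    refine Finset.sum_congr rfl fun x _ => ?_
    have hset : (G.neighborFinset x).filter (fun y => π x < π y)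
        = Finset.univ.filter (fun y => G.Adj x y ∧ π x < π y) := by
      ext y; simp [SimpleGraph.mem_neighborFinset]
    rw [hset, Finset.sum_filter]
  have h2 : edgeMinDegSum G = ∑ p ∈ D, min (G.degree p.1) (G.degree p.2) := by
    unfold edgeMinDegSum
    refine Eq.symm (Finset.sum_bij (fun (p : X × X) _ => Sym2.mk p.1 p.2) ?_ ?_ ?_ ?_)
    · intro p hp
      simp only [hD, Finset.mem_filter] at hp
      simpa [SimpleGraph.mem_edgeFinset] using hp.2.1
    · intro p hp q hq h
      simp only [hD, Finset.mem_filter] at hp hq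
      rw [Sym2.mk_eq_mk_iff] at h
      rcases h with h | h
      · exact h
      · exfalso
        have h1 : p.1 = q.2 := congrArg Prod.fst h
        have h2 : p.2 = q.1 := congrArg Prod.snd h
        rw [h1, h2] at hp
        exact absurd (hp.2.2.trans hq.2.2) (lt_irrefl _)
    · intro e he
      rw [SimpleGraph.mem_edgeFinset] at he
      induction e with
      | _ x y =>
        have hadj : G.Adj x y := he
        have hne : π x ≠ π y := fun h => hadj.ne (hπ h)
        rcases hne.lt_or_gt with hlt | hlt
        · exact ⟨(x, y), by simp [hD, hadj, hlt], rfl⟩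
        · exact ⟨(y, x), by simp [hD, hadj.symm, hlt], Sym2.eq_swap⟩
    · intro p hp
      rfl
  rw [h1, h2]
  refine Finset.sum_le_sum fun p hp => ?_
  simp only [hD, Finset.mem_filter] at hp
  have hmin : min (G.degree p.1) (G.degree p.2) = G.degree p.2 :=
    min_eq_right (hdeg p.1 p.2 hp.2.2)
  rw [hmin]
  calc rankedDeg G π p.1 p.2 ≤ (G.neighborFinset p.2).card := Finset.card_filter_le _ _
    _ = G.degree p.2 := G.card_neighborFinset_eq_degree p.2
end

section
/- Let G = (X, E) be a finite simple undirected graph and let π be a ranking of G such that π(x) < π(y) implies ⌊log₂ deg(y)⌋ ≤ ⌊log₂ deg(x)⌋ (vertices are ranked in decreasing order of the floor of the base-2 logarithm of their degree, an approximate degree order). Then the number of wedges processed under π satisfies W(π) ≤ 2 · Σ_{{x,y} ∈ E} min(deg(x), deg(y)). -/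
open Finset

/-- If `π` ranks vertices in decreasing order of `⌊log₂ degree⌋` (approximate degree
order), then the number of wedges processed under `π` is at most
`2 · Σ_{{x,y} ∈ E} min(deg(x), deg(y))`. -/
theorem wedgesProcessed_le_of_approx_degree_order {X L : Type*} [Fintype X]
    [DecidableEq X] [LinearOrder L] (G : SimpleGraph X) [DecidableRel G.Adj] (π : X → L)
    (hπ : Function.Injective π)
    (hdeg : ∀ x y : X, π x < π y → Nat.log 2 (G.degree y) ≤ Nat.log 2 (G.degree x)) :
    wedgesProcessed G π ≤ 2 * edgeMinDegSum G := by
  classical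
  have hW : wedgesProcessed G π ≤
      ∑ x : X, ∑ y ∈ (G.neighborFinset x).filter (fun y => π x < π y),
        2 * min (G.degree x) (G.degree y) := by
    apply Finset.sum_le_sum
    intro x _
    apply Finset.sum_le_sum
    intro y hy
    rw [Finset.mem_filter, SimpleGraph.mem_neighborFinset] at hy
    obtain ⟨hadj, hlt⟩ := hy
    have hdy : rankedDeg G π x y ≤ G.degree y := by
      rw [rankedDeg, ← SimpleGraph.card_neighborFinset_eq_degree]
      exact Finset.card_filter_le _ _
    have hx1 : 0 < G.degree x := by
      rw [← SimpleGraph.card_neighborFinset_eq_degree]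
      exact Finset.card_pos.mpr ⟨y, by simpa using hadj⟩
    have hy1 : 0 < G.degree y := by
      rw [← SimpleGraph.card_neighborFinset_eq_degree]
      exact Finset.card_pos.mpr ⟨x, by simpa using hadj.symm⟩
    have hle : G.degree y ≤ 2 * G.degree x := by
      have h1 : G.degree y < 2 ^ (Nat.log 2 (G.degree y) + 1) :=
        Nat.lt_pow_succ_log_self (by norm_num) _
      have h2 : (2:ℕ) ^ (Nat.log 2 (G.degree y) + 1) ≤ 2 ^ (Nat.log 2 (G.degree x) + 1) :=
        Nat.pow_le_pow_right (by norm_num) (by have := hdeg x y hlt; omega)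
      have h3 : (2:ℕ) ^ (Nat.log 2 (G.degree x)) ≤ G.degree x :=
        Nat.pow_log_le_self 2 hx1.ne'
      have h4 : (2:ℕ) ^ (Nat.log 2 (G.degree x) + 1) = 2 * 2 ^ (Nat.log 2 (G.degree x)) :=
        pow_succ' 2 _
      omega
    calc rankedDeg G π x y ≤ G.degree y := hdy
      _ ≤ 2 * min (G.degree x) (G.degree y) := by
          rcases le_total (G.degree x) (G.degree y) with h | h
          · rw [min_eq_left h]; exact hle
          · rw [min_eq_right h]; omega
  refine hW.trans (le_of_eq ?_)
  have : ∀ x : X, ∑ y ∈ (G.neighborFinset x).filter (fun y => π x < π y),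
      2 * min (G.degree x) (G.degree y)
      = 2 * ∑ y ∈ (G.neighborFinset x).filter (fun y => π x < π y),
        min (G.degree x) (G.degree y) := fun x => (Finset.mul_sum _ _ _).symm
  simp_rw [this, ← Finset.mul_sum]
  congr 1
  rw [Finset.sum_sigma']
  refine Finset.sum_bij (fun p _ => s(p.1, p.2)) ?_ ?_ ?_ ?_
  · rintro ⟨x, y⟩ hp
    simp only [Finset.mem_sigma, Finset.mem_filter, SimpleGraph.mem_neighborFinset] at hp
    simpa [SimpleGraph.mem_edgeFinset] using hp.2.1
  · rintro ⟨x, y⟩ hp ⟨x', y'⟩ hp' h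
    simp only [Finset.mem_sigma, Finset.mem_filter, SimpleGraph.mem_neighborFinset] at hp hp'
    have h : s((x, y).1, (x, y).2) = s((x', y').1, (x', y').2) := h
    rw [Sym2.mk_eq_mk_iff] at h
    rcases h with h | h
    · simpa using h
    · simp only [Prod.swap_prod_mk, Prod.mk.injEq] at h
      obtain ⟨h1, h2⟩ := h
      subst h1; subst h2
      exact absurd hp'.2.2 (lt_asymm hp.2.2)
  · intro e he
    rw [SimpleGraph.mem_edgeFinset] at he
    induction e using Sym2.ind with
    | _ a b =>
      have hadj : G.Adj a b := he
      have hne : π a ≠ π b := fun h => hadj.ne (hπ h)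
      rcases hne.lt_or_gt with h | h
      · exact ⟨⟨a, b⟩, by simp [Finset.mem_sigma, hadj, h], rfl⟩
      · exact ⟨⟨b, a⟩, by simp [Finset.mem_sigma, hadj.symm, h], Sym2.eq_swap⟩
  · rintro ⟨x, y⟩ hp
    simp
end

section
/- Let G = (X, E) be a finite simple undirected graph and let π be a ranking of G that is a complement degeneracy ordering: for all vertices x, y with π(y) > π(x), |{z ∈ N(y) : π(z) ≥ π(x)}| ≤ |{z ∈ N(x) : π(z) ≥ π(x)}| (each vertex has maximum degree in the subgraph induced on the vertices of rank at least its own). Then for every edge {x, y} ∈ E with π(x) < π(y), deg_x(y) ≤ min(deg(x), deg(y)), and consequently the number of wedges processed under π satisfies W(π) ≤ Σ_{{x,y} ∈ E} min(deg(x), deg(y)). -/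
open Finset

/-- `|{z ∈ N(y) : π(z) ≥ π(x)}|`: the degree of `y` in the subgraph induced on the
vertices of rank at least the rank of `x`. -/
def residualDeg {X L : Type*} [Fintype X] [LinearOrder L] (G : SimpleGraph X)
    [DecidableRel G.Adj] (π : X → L) (x y : X) : ℕ :=
  ((G.neighborFinset y).filter (fun z => π x ≤ π z)).card

/-- If `π` is a complement degeneracy ordering (each vertex has maximum degree in the
subgraph induced on the vertices of rank at least its own), then for every edge
`{x, y} ∈ E` with `π(x) < π(y)` we have `deg_x(y) ≤ min(deg(x), deg(y))`, and the
number of wedges processed satisfies `W(π) ≤ Σ_{{x,y} ∈ E} min(deg(x), deg(y))`. -/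
theorem wedgesProcessed_le_of_complement_degeneracy_order {X L : Type*} [Fintype X]
    [DecidableEq X] [LinearOrder L] (G : SimpleGraph X) [DecidableRel G.Adj] (π : X → L)
    (hπ : Function.Injective π)
    (hdeg : ∀ x y : X, π x < π y → residualDeg G π x y ≤ residualDeg G π x x) :
    (∀ x y : X, G.Adj x y → π x < π y →
        rankedDeg G π x y ≤ min (G.degree x) (G.degree y)) ∧
    wedgesProcessed G π ≤ edgeMinDegSum G := by
  have key : ∀ x y : X, G.Adj x y → π x < π y →
      rankedDeg G π x y ≤ min (G.degree x) (G.degree y) := by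
    intro x y _ hxy
    refine le_min ?_ ?_
    · calc rankedDeg G π x y ≤ residualDeg G π x y := by
            apply card_le_card
            intro z hz
            rw [mem_filter] at hz ⊢
            exact ⟨hz.1, hz.2.le⟩
          _ ≤ residualDeg G π x x := hdeg x y hxy
          _ ≤ G.degree x := by
            rw [← SimpleGraph.card_neighborFinset_eq_degree]
            exact card_le_card (filter_subset _ _)
    · rw [← SimpleGraph.card_neighborFinset_eq_degree]
      exact card_le_card (filter_subset _ _)
  refine ⟨key, ?_⟩
  have step : wedgesProcessed G π ≤
      ∑ x : X, ∑ y ∈ (G.neighborFinset x).filter (fun y => π x < π y),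
        min (G.degree x) (G.degree y) := by
    apply Finset.sum_le_sum
    intro x _
    apply Finset.sum_le_sum
    intro y hy
    rw [mem_filter, SimpleGraph.mem_neighborFinset] at hy
    exact key x y hy.1 hy.2
  refine step.trans_eq ?_
  rw [Finset.sum_sigma']
  refine Finset.sum_bij (fun p _ => s(p.1, p.2)) ?_ ?_ ?_ ?_
  · rintro ⟨x, y⟩ hp
    simp only [mem_sigma, mem_filter, SimpleGraph.mem_neighborFinset] at hp
    simpa [SimpleGraph.mem_edgeFinset] using hp.2.1
  · rintro ⟨x, y⟩ hp ⟨x', y'⟩ hp' h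
    simp only [mem_sigma, mem_filter, SimpleGraph.mem_neighborFinset] at hp hp'
    change s((x, y).1, (x, y).2) = s((x', y').1, (x', y').2) at h
    rw [Sym2.mk_eq_mk_iff] at h
    rcases h with h | h
    · simpa using h
    · exfalso
      simp only [Prod.swap_prod_mk, Prod.mk.injEq] at h
      obtain ⟨h1, h2⟩ := h
      subst h1; subst h2
      exact absurd hp'.2.2 (not_lt.mpr hp.2.2.le)
  · intro e he
    rw [SimpleGraph.mem_edgeFinset] at he
    induction e using Sym2.ind with
    | _ x y =>
      rw [SimpleGraph.mem_edgeSet] at he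
      rcases lt_or_gt_of_ne (fun h => he.ne (hπ h)) with h | h
      · exact ⟨⟨x, y⟩, by simp [mem_sigma, SimpleGraph.mem_neighborFinset, he, h], rfl⟩
      · exact ⟨⟨y, x⟩, by simp [mem_sigma, SimpleGraph.mem_neighborFinset, he.symm, h],
          Sym2.eq_swap⟩
  · rintro ⟨x, y⟩ _
    simp [edgeMinDegSum]
end

section
/- Let G = (X, E) be a finite simple undirected graph and let π be a ranking of G that is an approximate complement degeneracy ordering: for all vertices x, y with π(y) > π(x), ⌊log₂ |{z ∈ N(y) : π(z) ≥ π(x)}|⌋ ≤ ⌊log₂ |{z ∈ N(x) : π(z) ≥ π(x)}|⌋ (each vertex has maximum floor-log₂ degree in the subgraph induced on the vertices of rank at least its own). Then for every edge {x, y} ∈ E with π(x) < π(y), deg_x(y) ≤ min(deg(y), 2·deg(x)), and consequently the number of wedges processed under π satisfies W(π) ≤ 2 · Σ_{{x,y} ∈ E} min(deg(x), deg(y)). -/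
open Finset

lemma sum_pairs_eq_edges {X L : Type*} [Fintype X] [DecidableEq X] [LinearOrder L]
    (G : SimpleGraph X) [DecidableRel G.Adj] (π : X → L) (hπ : Function.Injective π)
    (f : X → X → ℕ) (hf : ∀ x y, f x y = f y x) :
    ∑ x : X, ∑ y ∈ (G.neighborFinset x).filter (fun y => π x < π y), f x y
      = ∑ e ∈ G.edgeFinset, Sym2.lift ⟨f, hf⟩ e := by
  rw [← Finset.sum_sigma (Finset.univ)
      (fun x => (G.neighborFinset x).filter (fun y => π x < π y))
      (fun p => f p.1 p.2)]
  refine Finset.sum_bij (fun p _ => s(p.1, p.2)) ?_ ?_ ?_ ?_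
  · rintro ⟨a, b⟩ hab
    simp only [Finset.mem_sigma, Finset.mem_filter, SimpleGraph.mem_neighborFinset] at hab
    simpa [SimpleGraph.mem_edgeFinset] using hab.2.1
  · rintro ⟨a, b⟩ ha ⟨c, d⟩ hc h
    simp only [Finset.mem_sigma, Finset.mem_filter, SimpleGraph.mem_neighborFinset] at ha hc
    replace h := (Sym2.mk_eq_mk_iff (p := (a, b)) (q := (c, d))).1 h
    rcases h with h | h
    · simpa using h
    · simp only [Prod.swap_prod_mk, Prod.mk.injEq] at h
      exact absurd (h.1 ▸ h.2 ▸ hc.2.2) (not_lt.2 ha.2.2.le)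
  · intro e he
    induction e with
    | _ a b =>
      rw [SimpleGraph.mem_edgeFinset, SimpleGraph.mem_edgeSet] at he
      have hne : π a ≠ π b := fun h => he.ne (hπ h)
      rcases hne.lt_or_gt with h | h
      · exact ⟨⟨a, b⟩, by simp [Finset.mem_sigma, he, h], rfl⟩
      · exact ⟨⟨b, a⟩, by simp [Finset.mem_sigma, he.symm, h], Sym2.eq_swap⟩
  · rintro ⟨a, b⟩ _
    simp

/-- If `π` is an approximate complement degeneracy ordering (each vertex has maximum
`⌊log₂ degree⌋` in the subgraph induced on the vertices of rank at least its own), then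
for every edge `{x, y} ∈ E` with `π(x) < π(y)` we have
`deg_x(y) ≤ min(deg(y), 2·deg(x))`, and the number of wedges processed satisfies
`W(π) ≤ 2 · Σ_{{x,y} ∈ E} min(deg(x), deg(y))`. -/
theorem wedgesProcessed_le_of_approx_complement_degeneracy_order {X L : Type*}
    [Fintype X] [DecidableEq X] [LinearOrder L] (G : SimpleGraph X)
    [DecidableRel G.Adj] (π : X → L) (hπ : Function.Injective π)
    (hdeg : ∀ x y : X, π x < π y →
      Nat.log 2 (residualDeg G π x y) ≤ Nat.log 2 (residualDeg G π x x)) :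
    (∀ x y : X, G.Adj x y → π x < π y →
        rankedDeg G π x y ≤ min (G.degree y) (2 * G.degree x)) ∧
    wedgesProcessed G π ≤ 2 * edgeMinDegSum G := by
  have key : ∀ x y : X, G.Adj x y → π x < π y →
      rankedDeg G π x y ≤ min (G.degree y) (2 * G.degree x) := by
    intro x y hadj hlt
    have h1 : rankedDeg G π x y ≤ residualDeg G π x y := by
      refine Finset.card_le_card (fun z hz => ?_)
      rw [Finset.mem_filter] at hz ⊢
      exact ⟨hz.1, le_of_lt hz.2⟩
    have h2 : residualDeg G π x y ≤ G.degree y := by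
      rw [← SimpleGraph.card_neighborFinset_eq_degree]
      exact Finset.card_filter_le _ _
    have hxx_pos : 0 < residualDeg G π x x := by
      apply Finset.card_pos.2
      exact ⟨y, Finset.mem_filter.2 ⟨(SimpleGraph.mem_neighborFinset _ _ _).2 hadj, hlt.le⟩⟩
    have h3 : residualDeg G π x y ≤ 2 * residualDeg G π x x := by
      have hlog := hdeg x y hlt
      refine le_of_lt ?_
      calc residualDeg G π x y < 2 ^ (Nat.log 2 (residualDeg G π x y) + 1) :=
              Nat.lt_pow_succ_log_self (by norm_num) _
        _ ≤ 2 ^ (Nat.log 2 (residualDeg G π x x) + 1) :=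
              Nat.pow_le_pow_right (by norm_num) (by omega)
        _ = 2 * 2 ^ (Nat.log 2 (residualDeg G π x x)) := by ring
        _ ≤ 2 * residualDeg G π x x :=
              Nat.mul_le_mul_left 2 (Nat.pow_log_le_self 2 hxx_pos.ne')
    have hxxd : residualDeg G π x x ≤ G.degree x := by
      rw [← SimpleGraph.card_neighborFinset_eq_degree]
      exact Finset.card_filter_le _ _
    exact le_min (h1.trans h2) (h1.trans (h3.trans (by omega)))
  refine ⟨key, ?_⟩
  have step1 : wedgesProcessed G π ≤
      ∑ x : X, ∑ y ∈ (G.neighborFinset x).filter (fun y => π x < π y),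
        2 * min (G.degree x) (G.degree y) := by
    unfold wedgesProcessed
    apply Finset.sum_le_sum
    intro x _
    apply Finset.sum_le_sum
    intro y hy
    simp only [Finset.mem_filter, SimpleGraph.mem_neighborFinset] at hy
    have := key x y hy.1 hy.2
    have hmin : min (G.degree y) (2 * G.degree x) ≤ 2 * min (G.degree x) (G.degree y) := by
      omega
    omega
  calc wedgesProcessed G π ≤ _ := step1
    _ = 2 * ∑ x : X, ∑ y ∈ (G.neighborFinset x).filter (fun y => π x < π y),
          min (G.degree x) (G.degree y) := by
        rw [Finset.mul_sum]; congr 1; ext x; rw [Finset.mul_sum]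
    _ = 2 * edgeMinDegSum G := by
        rw [sum_pairs_eq_edges G π hπ (fun a b => min (G.degree a) (G.degree b))
          (fun a b => by simp [min_comm])]
        rfl
end

section
/- Define f mapping functions C : ℕ → ℕ to functions ℕ → ℕ by f(C)(0) = C(0) mod 2 and f(C)(i+1) = C(i+1) mod 2 + ⌊C(i)/2⌋. Then for every C : ℕ → ℕ, every k ≥ 1, and every j < k, the k-fold iterate satisfies f^[k](C)(j) ≤ 1. Moreover, if C(j) ≤ 1 for all j, then f(C) = C. -/
/-!
A rank receives new trees only from the rank just below it, and a rank holding at most one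
tree passes nothing up. So if ranks `< k` hold at most one tree, one more round leaves every
rank `≤ k` with at most one tree: the settled region grows by one rank per round.
-/

/-- One round of the consolidation step of a Fibonacci heap's delete-min: `C i` is the
number of trees of rank `i` on the root list; in each round the trees of each rank are
paired up and each pair merges into a tree of the next rank, leaving at most one
leftover tree. -/
def consolidate (C : ℕ → ℕ) : ℕ → ℕ
  | 0 => C 0 % 2
  | (i + 1) => C (i + 1) % 2 + C i / 2

section

variable {C : ℕ → ℕ}

theorem consolidate_zero_le_one : consolidate C 0 ≤ 1 := by
  simp only [consolidate]
  omega

theorem consolidate_succ_le_one {i : ℕ} (h : C i ≤ 1) : consolidate C (i + 1) ≤ 1 := by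
  simp only [consolidate]
  omega

theorem consolidate_le_one_of_forall_lt_le_one {k : ℕ} (h : ∀ j < k, C j ≤ 1) :
    ∀ j ≤ k, consolidate C j ≤ 1
  | 0, _ => consolidate_zero_le_one
  | i + 1, hi => consolidate_succ_le_one (h i hi)

theorem iterate_consolidate_le_one (C : ℕ → ℕ) :
    ∀ k, ∀ j < k, consolidate^[k] C j ≤ 1
  | 0, _, hj => absurd hj (Nat.not_lt_zero _)
  | k + 1, j, hj => by
    rw [Function.iterate_succ_apply']
    exact consolidate_le_one_of_forall_lt_le_one (iterate_consolidate_le_one C k) j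
      (Nat.le_of_lt_succ hj)

theorem consolidate_eq_self_of_le_one (h : ∀ j, C j ≤ 1) : consolidate C = C := by
  funext j
  cases j with
  | zero =>
    have := h 0
    simp only [consolidate]
    omega
  | succ i =>
    have := h i
    have := h (i + 1)
    simp only [consolidate]
    omega

end

/-- After `k ≥ 1` rounds of consolidation, every rank group below `k` contains at most
one tree; moreover any configuration with at most one tree per rank is a fixed point of
consolidation. -/
theorem consolidate_iterate_le_one_and_fixed :
    (∀ (C : ℕ → ℕ) (k j : ℕ), 1 ≤ k → j < k → consolidate^[k] C j ≤ 1) ∧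
    (∀ C : ℕ → ℕ, (∀ j, C j ≤ 1) → consolidate C = C) :=
  ⟨fun C k j _ hj => iterate_consolidate_le_one C k j hj,
    fun _ h => consolidate_eq_self_of_le_one h⟩
end

section
/- Define f mapping functions C : ℕ → ℕ to functions ℕ → ℕ by f(C)(0) = C(0) mod 2 and f(C)(i+1) = C(i+1) mod 2 + ⌊C(i)/2⌋. Suppose C has finite support and Σ_{i} C(i)·2^i = S with S ≥ 1. Then Σ_{i} f(C)(i)·2^i = S (the weighted sum is invariant under f), and for k = ⌊log₂ S⌋ + 1, the k-fold iterate satisfies f^[k](C)(j) ≤ 1 for every j ∈ ℕ. -/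
open Finset Function

section Support

variable {C : ℕ → ℕ} {n : ℕ}

lemma support_consolidate_subset_range (h : support C ⊆ range n) :
    support (consolidate C) ⊆ range (n + 1) := by
  intro i hi
  by_contra! hni
  simp only [coe_range, Set.mem_Iio, not_lt] at hni
  obtain ⟨j, rfl⟩ : ∃ j, i = j + 1 := ⟨i - 1, by omega⟩
  have hC : ∀ m, n ≤ m → C m = 0 := fun m hm =>
    notMem_support.1 fun hm' => (by simpa using h hm' : m < n).not_ge hm
  exact hi (by simp [consolidate, hC j (by omega), hC (j + 1) (by omega)])

lemma support_iterate_consolidate_subset_range (h : support C ⊆ range n) (k : ℕ) :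
    support (consolidate^[k] C) ⊆ range (n + k) := by
  induction k with
  | zero => simpa using h
  | succ k ih =>
    rw [iterate_succ_apply', ← add_assoc]
    exact support_consolidate_subset_range ih

end Support

section Weight

variable {C : ℕ → ℕ} {n : ℕ}

lemma finsum_mul_two_pow_eq_sum_range (h : support C ⊆ range n) :
    ∑ᶠ i, C i * 2 ^ i = ∑ i ∈ range n, C i * 2 ^ i :=
  finsum_eq_sum_of_support_subset _ ((support_mul_subset_left _ _).trans h)

/-- `C n / 2` is the carry out of the ranks `≤ n`. -/
lemma sum_range_consolidate_add_carry (C : ℕ → ℕ) (n : ℕ) :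
    ∑ i ∈ range (n + 1), consolidate C i * 2 ^ i + C n / 2 * 2 ^ (n + 1) =
      ∑ i ∈ range (n + 1), C i * 2 ^ i := by
  induction n with
  | zero =>
    simp only [zero_add, sum_range_one, consolidate, pow_zero, pow_one, mul_one]
    omega
  | succ n ih =>
    rw [sum_range_succ, sum_range_succ (fun i => C i * 2 ^ i), ← ih]
    change _ + (C (n + 1) % 2 + C n / 2) * 2 ^ (n + 1) + _ = _
    conv_rhs => rw [← Nat.mod_add_div (C (n + 1)) 2]
    ring

lemma finsum_consolidate_mul_two_pow (h : support C ⊆ range n) :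
    ∑ᶠ i, consolidate C i * 2 ^ i = ∑ᶠ i, C i * 2 ^ i := by
  have hn : C n = 0 := notMem_support.1 fun hn => by simpa using h hn
  have h' : support C ⊆ range (n + 1) := h.trans (by simp)
  rw [finsum_mul_two_pow_eq_sum_range (support_consolidate_subset_range h),
    finsum_mul_two_pow_eq_sum_range h', ← sum_range_consolidate_add_carry C, hn, Nat.zero_div,
    zero_mul, add_zero]

lemma finsum_iterate_consolidate_mul_two_pow (h : support C ⊆ range n) (k : ℕ) :
    ∑ᶠ i, consolidate^[k] C i * 2 ^ i = ∑ᶠ i, C i * 2 ^ i := by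
  induction k with
  | zero => rfl
  | succ k ih =>
    rw [iterate_succ_apply',
      finsum_consolidate_mul_two_pow (support_iterate_consolidate_subset_range h k), ih]

lemma eq_zero_of_finsum_mul_two_pow_lt (hC : (support C).Finite) {j : ℕ}
    (h : ∑ᶠ i, C i * 2 ^ i < 2 ^ j) : C j = 0 := by
  have hj : C j * 2 ^ j ≤ ∑ᶠ i, C i * 2 ^ i :=
    single_le_finsum j (hC.subset (support_mul_subset_left _ _)) fun _ => Nat.zero_le _
  by_contra hne
  exact (h.trans_le (Nat.le_mul_of_pos_left _ (Nat.pos_of_ne_zero hne))).not_ge hj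

end Weight

lemma iterate_consolidate_le_one_of_lt (C : ℕ → ℕ) {k j : ℕ} (hjk : j < k) :
    consolidate^[k] C j ≤ 1 := by
  induction k generalizing j with
  | zero => omega
  | succ k ih =>
    rw [iterate_succ_apply']
    cases j with
    | zero => exact Nat.le_of_lt_succ (Nat.mod_lt _ two_pos)
    | succ j =>
      have hcarry : consolidate^[k] C j / 2 = 0 := 
        Nat.div_eq_of_lt ((ih (by omega)).trans_lt one_lt_two)
      change consolidate^[k] C (j + 1) % 2 + consolidate^[k] C j / 2 ≤ 1
      omega

theorem consolidate_weight_invariant_and_rounds_general (C : ℕ → ℕ) (S : ℕ)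
    (hfin : (Function.support C).Finite)
    (hS : ∑ᶠ i, C i * 2 ^ i = S) :
    (∑ᶠ i, consolidate C i * 2 ^ i = S) ∧
    ∀ j, consolidate^[Nat.log 2 S + 1] C j ≤ 1 := by
  obtain ⟨n, hn⟩ := hfin.toFinset.exists_nat_subset_range
  have hsupp : support C ⊆ range n := by simpa [← coe_subset] using hn
  refine ⟨(finsum_consolidate_mul_two_pow hsupp).trans hS, fun j => ?_⟩
  set K := Nat.log 2 S + 1
  rcases lt_or_ge j K with hjK | hKj
  · exact iterate_consolidate_le_one_of_lt C hjK
  · have hweight : ∑ᶠ i, consolidate^[K] C i * 2 ^ i < 2 ^ j := by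
      rw [finsum_iterate_consolidate_mul_two_pow hsupp, hS]
      exact (Nat.lt_pow_succ_log_self one_lt_two S).trans_le (Nat.pow_le_pow_right two_pos hKj)
    have hfinK : (support (consolidate^[K] C)).Finite :=
      (range (n + K)).finite_toSet.subset (support_iterate_consolidate_subset_range hsupp K)
    rw [eq_zero_of_finsum_mul_two_pow_lt hfinK hweight]
    exact zero_le_one

/-- If `C` has finite support and invariant weight `Σ_i C(i)·2^i = S ≥ 1`, then the
weight is preserved by one round of consolidation, and after `⌊log₂ S⌋ + 1` rounds every
rank group contains at most one tree. -/
theorem consolidate_weight_invariant_and_rounds (C : ℕ → ℕ) (S : ℕ)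
    (hfin : (Function.support C).Finite) (hS1 : 1 ≤ S)
    (hS : ∑ᶠ i, C i * 2 ^ i = S) :
    (∑ᶠ i, consolidate C i * 2 ^ i = S) ∧
    ∀ j, consolidate^[Nat.log 2 S + 1] C j ≤ 1 :=
  consolidate_weight_invariant_and_rounds_general C S hfin hS
end
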